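/- arXiv:2003.01428 — 4 statements merged into one kernel-verified Lean document; each statement's English description precedes it below -/
import Mathlib

section
/- Let k be a field and let f : X → Y and g : Y → Z be morphisms of schemes of finite type over k such that f is an open and surjective map of underlying topological spaces. If both f and g ∘ f are weakly equidimensional, then g is weakly equidimensional. -/
open AlgebraicGeometry CategoryTheory

/-- The local dimension of a topological space at a point: the infimum, over all open
neighbourhoods `U` of the point, of the Krull dimension of `U`. -/
noncomputable def locDim (T : Type*) [TopologicalSpace T] (t : T) : WithBot ℕ∞ :=
  ⨅ U : {U : Set T // IsOpen U ∧ t ∈ U}, topologicalKrullDim U.1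

/-- The local dimension, viewed as an integer.  (At every point of a scheme of finite type
over a field the local dimension is a natural number, so no information is lost.) -/
noncomputable def locDimZ (T : Type*) [TopologicalSpace T] (t : T) : ℤ :=
  ((locDim T t).unbotD 0).toNat

/-- The dimension function `dim_f(x) = dim_x X - dim_{f x} Y` of a map. -/
noncomputable def dimFn {X Y : Type*} [TopologicalSpace X] [TopologicalSpace Y]
    (f : X → Y) : X → ℤ :=
  fun x => locDimZ X x - locDimZ Y (f x)

/-- A map is weakly equidimensional if its dimension function is locally constant. -/
def WeaklyEquidimensional {X Y : Type*} [TopologicalSpace X] [TopologicalSpace Y]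
    (f : X → Y) : Prop :=
  IsLocallyConstant (dimFn f)

/-- A map is equidimensional if it is weakly equidimensional and the value of the dimension
function at every point `x` is the local dimension of the fibre through `x` at `x`. -/
def Equidimensional {X Y : Type*} [TopologicalSpace X] [TopologicalSpace Y]
    (f : X → Y) : Prop :=
  WeaklyEquidimensional f ∧ ∀ x : X, dimFn f x = locDimZ (f ⁻¹' {f x}) ⟨x, rfl⟩

/-- `X` is a scheme of finite type over the field `k`, via the structure morphism `s`:
the structure morphism is quasi-compact, quasi-separated, and locally of finite type. -/
def FiniteTypeOverField {k : Type} [Field k] {X : Scheme}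
    (s : X ⟶ Spec (CommRingCat.of k)) : Prop :=
  LocallyOfFiniteType s ∧ QuasiCompact s ∧ QuasiSeparated s

theorem IsLocallyConstant.of_comp_of_isOpenMap {X Y α : Type*} [TopologicalSpace X]
    [TopologicalSpace Y] {f : X → Y} {h : Y → α} (hfopen : IsOpenMap f)
    (hfsurj : Function.Surjective f) (hc : IsLocallyConstant (h ∘ f)) :
    IsLocallyConstant h := by
  intro s
  rw [← Set.image_preimage_eq (h ⁻¹' s) hfsurj]
  exact hfopen _ (hc s)

theorem dimFn_comp {X Y Z : Type*} [TopologicalSpace X] [TopologicalSpace Y]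
    [TopologicalSpace Z] (f : X → Y) (g : Y → Z) :
    dimFn (g ∘ f) = dimFn f + dimFn g ∘ f := by
  funext x
  simp only [dimFn, Function.comp_apply, Pi.add_apply]
  ring

theorem WeaklyEquidimensional.of_comp {X Y Z : Type*} [TopologicalSpace X]
    [TopologicalSpace Y] [TopologicalSpace Z] {f : X → Y} {g : Y → Z}
    (hfopen : IsOpenMap f) (hfsurj : Function.Surjective f)
    (hwf : WeaklyEquidimensional f) (hwgf : WeaklyEquidimensional (g ∘ f)) :
    WeaklyEquidimensional g := by
  have hlc : IsLocallyConstant (dimFn g ∘ f) := by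
    have h := hwgf.sub hwf
    rwa [dimFn_comp, add_sub_cancel_left] at h
  exact hlc.of_comp_of_isOpenMap hfopen hfsurj

theorem statement1_general
    (X Y Z : Scheme)
    (f : X ⟶ Y) (g : Y ⟶ Z)
    (hfopen : IsOpenMap (⇑f.base)) (hfsurj : Function.Surjective (⇑f.base))
    (hwf : WeaklyEquidimensional (⇑f.base))
    (hwgf : WeaklyEquidimensional (⇑(f ≫ g).base)) :
    WeaklyEquidimensional (⇑g.base) :=
  WeaklyEquidimensional.of_comp hfopen hfsurj hwf hwgf

theorem statement1 (k : Type) [Field k]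
    (X Y Z : Scheme)
    (sX : X ⟶ Spec (CommRingCat.of k)) (sY : Y ⟶ Spec (CommRingCat.of k))
    (sZ : Z ⟶ Spec (CommRingCat.of k))
    (hX : FiniteTypeOverField sX) (hY : FiniteTypeOverField sY)
    (hZ : FiniteTypeOverField sZ)
    (f : X ⟶ Y) (g : Y ⟶ Z) (hf : f ≫ sY = sX) (hg : g ≫ sZ = sY)
    (hfopen : IsOpenMap (⇑f.base)) (hfsurj : Function.Surjective (⇑f.base))
    (hwf : WeaklyEquidimensional (⇑f.base))
    (hwgf : WeaklyEquidimensional (⇑(f ≫ g).base)) :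
    WeaklyEquidimensional (⇑g.base) :=
  statement1_general X Y Z f g hfopen hfsurj hwf hwgf
end

section
/- Let k be a field. Let S = colim_{α∈I} S_α and R = colim_{β∈J} R_β be commutative k-algebras, each presented as the colimit of a directed system, indexed by a directed preordered set, of finite-type commutative k-algebras in which all transition homomorphisms are smooth, and let φ : R → S be a k-algebra homomorphism which is strongly pro-smooth. Then for every β ∈ J there exists α₀ ∈ I such that for every α ≥ α₀ there is a smooth k-algebra homomorphism h : R_β → S_α whose composition with the canonical map S_α → S equals the composition of the canonical map R_β → R with φ. -/
/-- A homomorphism of commutative rings is smooth if the target is a formally smooth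
algebra of finite presentation over the source. -/
def IsSmoothHom {R S : Type} [CommRing R] [CommRing S] (f : R →+* S) : Prop :=
  @Algebra.FormallySmooth R S _ _ f.toAlgebra ∧ f.FinitePresentation

/-- A presentation of the commutative ring `A` as the colimit of a directed system of
commutative `R`-algebras (for the ring homomorphism `φ : R →+* A`). -/
structure DirectedColimitPresentation (R : Type) [CommRing R] (A : Type) [CommRing A]
    (φ : R →+* A) : Type 1 where
  /-- The (directed, preordered) index set. -/
  I : Type
  [pre : Preorder I]
  [dir : IsDirected I (· ≤ ·)]
  [ne : Nonempty I]
  /-- The objects of the system. -/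
  obj : I → Type
  [ring : ∀ i, CommRing (obj i)]
  /-- The structure homomorphisms making each object an `R`-algebra. -/
  str : ∀ i, R →+* obj i
  /-- The transition homomorphisms of the system. -/
  trans : ∀ i j : I, i ≤ j → (obj i →+* obj j)
  /-- The homomorphisms into the colimit. -/
  ins : ∀ i, obj i →+* A
  trans_refl : ∀ i, trans i i le_rfl = RingHom.id (obj i)
  trans_comp : ∀ (i j l : I) (hij : i ≤ j) (hjl : j ≤ l),
    (trans j l hjl).comp (trans i j hij) = trans i l (le_trans hij hjl)
  str_compat : ∀ (i j : I) (hij : i ≤ j), (trans i j hij).comp (str i) = str j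
  ins_compat : ∀ (i j : I) (hij : i ≤ j), (ins j).comp (trans i j hij) = ins i
  ins_str : ∀ i, (ins i).comp (str i) = φ
  jointly_surjective : ∀ a : A, ∃ i x, ins i x = a
  eventually_eq : ∀ (i : I) (x y : obj i), ins i x = ins i y →
    ∃ j, ∃ hij : i ≤ j, trans i j hij x = trans i j hij y

/-- A witness that `φ : R →+* A` is strongly pro-smooth: a presentation of `A` as the colimit
of a directed system of smooth `R`-algebras with smooth transition homomorphisms. -/
structure ProSmoothPresentation (R : Type) [CommRing R] (A : Type) [CommRing A]
    (φ : R →+* A) extends DirectedColimitPresentation R A φ where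
  str_smooth : ∀ i, IsSmoothHom (str i)
  trans_smooth : ∀ (i j : I) (hij : i ≤ j), IsSmoothHom (trans i j hij)

/-- A ring homomorphism is strongly pro-smooth if its target can be expressed as the colimit
of a directed system of smooth algebras over the source, with smooth transitions. -/
def IsStronglyProSmooth {R A : Type} [CommRing R] [CommRing A] (φ : R →+* A) : Prop :=
  Nonempty (ProSmoothPresentation R A φ)

/-!
Let `T = colim T_γ` be a presentation of `φ` by smooth `R`-algebras. The composite
`R_β → R → S` factors through some `S_{α₁}`, and `S_{α₁} → S` through some `T_δ`, compatibly
with `R_β`. The smooth `R`-algebra `T_δ` descends to a formally smooth algebra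
`W = R_d[X]/(f)` over some `R_d` with `d ≥ β`: a finite presentation of `T_δ`, together with
the finitely many polynomials witnessing its formal smoothness, is defined over some stage of
`R = colim R_d`, and `T_δ = colim_d R_d[X]/(f)`. So `S_{α₁} → T_δ` factors through such a `W`,
and since `W` is of finite presentation over `k`, `W → S` factors through some `S_{α₃}`,
compatibly with `S_{α₁}`. Now `S_{α₁} → S_{α₃}` factors through `W`, which is formally smooth
over `R_β`, while `S_{α₃}` is formally smooth over `S_{α₁}`; lifting first through `W` and then
through `S_{α₁}` shows that `S_{α₃}` is formally smooth over `R_β`.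
-/

open MvPolynomial

section DirectedColimit

variable {k : Type*} [CommRing k] {I : Type*} [Preorder I]
  {A : I → Type*} [∀ i, CommRing (A i)] [∀ i, Algebra k (A i)]
  {B : Type*} [CommRing B] [Algebra k B]

structure IsDirectedColimit (t : ∀ i j, i ≤ j → A i →ₐ[k] A j) (ι : ∀ i, A i →ₐ[k] B) :
    Prop where
  trans_comp_trans : ∀ i j l (hij : i ≤ j) (hjl : j ≤ l),
    (t j l hjl).comp (t i j hij) = t i l (hij.trans hjl)
  comp_trans : ∀ i j (hij : i ≤ j), (ι j).comp (t i j hij) = ι i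
  exists_eq : ∀ b, ∃ i x, ι i x = b
  exists_trans_eq : ∀ i (x y : A i), ι i x = ι i y → ∃ j, ∃ hij : i ≤ j, t i j hij x = t i j hij y

namespace IsDirectedColimit

variable {t : ∀ i j, i ≤ j → A i →ₐ[k] A j} {ι : ∀ i, A i →ₐ[k] B}
  (hA : IsDirectedColimit t ι)
include hA

theorem trans_trans_apply {i j l : I} (hij : i ≤ j) (hjl : j ≤ l) (x : A i) :
    t j l hjl (t i j hij x) = t i l (hij.trans hjl) x :=
  AlgHom.congr_fun (hA.trans_comp_trans i j l hij hjl) x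

theorem ι_trans_apply {i j : I} (hij : i ≤ j) (x : A i) : ι j (t i j hij x) = ι i x :=
  AlgHom.congr_fun (hA.comp_trans i j hij) x

variable [IsDirected I (· ≤ ·)] [Nonempty I]

theorem exists_eq_of_finite {m : Type*} [Finite m] (b : m → B) :
    ∃ i, ∃ x : m → A i, ∀ s, ι i (x s) = b s := by
  choose i x hx using fun s => hA.exists_eq (b s)
  obtain ⟨j, hj⟩ := (Set.finite_range i).bddAbove
  have hij : ∀ s, i s ≤ j := fun s => hj (Set.mem_range_self s)
  exact ⟨j, fun s => t _ j (hij s) (x s), fun s => by rw [hA.ι_trans_apply, hx]⟩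

theorem exists_trans_eq_of_finite {m : Type*} [Finite m] {i : I} (x y : m → A i)
    (hxy : ∀ s, ι i (x s) = ι i (y s)) :
    ∃ j, ∃ hij : i ≤ j, ∀ s, t i j hij (x s) = t i j hij (y s) := by
  choose j hij hj using fun s => hA.exists_trans_eq i (x s) (y s) (hxy s)
  obtain ⟨l, hl⟩ := ((Set.finite_range j).insert i).bddAbove
  have hjl : ∀ s, j s ≤ l := fun s => hl (Set.mem_insert_of_mem _ (Set.mem_range_self s))
  refine ⟨l, hl (Set.mem_insert i _), fun s => ?_⟩
  rw [← hA.trans_trans_apply (hij s) (hjl s), hj, hA.trans_trans_apply]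

theorem mvPolynomial (σ : Type*) :
    IsDirectedColimit (fun i j h => (mapAlgHom (t i j h) : MvPolynomial σ (A i) →ₐ[k] _))
      (fun i => mapAlgHom (ι i)) where
  trans_comp_trans i j l hij hjl := AlgHom.ext fun p => by
    simp only [AlgHom.comp_apply, mapAlgHom_apply, map_map]
    exact congr_arg (map · p) (RingHom.ext (hA.trans_trans_apply hij hjl))
  comp_trans i j hij := AlgHom.ext fun p => by
    simp only [AlgHom.comp_apply, mapAlgHom_apply, map_map]
    exact congr_arg (map · p) (RingHom.ext (hA.ι_trans_apply hij))
  exists_eq p := by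
    obtain ⟨i, x, hx⟩ := hA.exists_eq_of_finite fun μ : p.support => p.coeff μ
    refine ⟨i, ∑ μ ∈ p.support.attach, monomial μ.1 (x μ), ?_⟩
    conv_rhs => rw [p.as_sum, ← Finset.sum_attach]
    simp [hx]
  exists_trans_eq i p q hpq := by
    obtain ⟨j, hij, hj⟩ := hA.exists_trans_eq_of_finite
      (fun μ : (p - q).support => (p - q).coeff μ) 0 fun μ => by
        simpa [coeff_map, sub_eq_zero] using congr_arg (coeff μ.1) hpq
    refine ⟨j, hij, sub_eq_zero.mp ?_⟩
    ext μ
    by_cases hμ : μ ∈ (p - q).support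
    · simpa [coeff_map] using hj ⟨μ, hμ⟩
    · rw [mem_support_iff, not_not] at hμ
      simp only [mapAlgHom_apply, coeff_map, coeff_sub, coeff_zero, RingHom.coe_coe]
      rw [← map_sub, ← coeff_sub, hμ, map_zero]

theorem exists_factor {C : Type*} [CommRing C] [Algebra k C] [Algebra.FinitePresentation k C]
    (f : C →ₐ[k] B) : ∃ i, ∃ g : C →ₐ[k] A i, (ι i).comp g = f := by
  obtain ⟨n, π, hπ, s, hs⟩ := Algebra.FinitePresentation.out (R := k) (A := C)
  obtain ⟨i, x, hx⟩ := hA.exists_eq_of_finite fun v => f (π (X v))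
  have hcomp : (ι i).comp (aeval x) = f.comp π := algHom_ext fun v => by simp [hx]
  obtain ⟨j, hij, hj⟩ := hA.exists_trans_eq_of_finite (fun r : s => aeval x r.1) 0 fun r => by
    have hr : π r.1 = 0 := by
      simpa using (hs ▸ Ideal.subset_span r.2 : r.1 ∈ RingHom.ker π.toRingHom)
    simpa [hr] using AlgHom.congr_fun hcomp r.1
  have hker : RingHom.ker π.toRingHom ≤ RingHom.ker ((t i j hij).comp (aeval x)).toRingHom := by
    rw [← hs, Ideal.span_le]
    intro r hr
    simpa using hj ⟨r, hr⟩
  refine ⟨j, AlgHom.liftOfSurjective π hπ _ hker, AlgHom.ext fun c => ?_⟩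
  obtain ⟨p, rfl⟩ := hπ c
  simpa [hA.ι_trans_apply] using AlgHom.congr_fun hcomp p

theorem exists_trans_comp_eq {C : Type*} [CommRing C] [Algebra k C] [Algebra.FiniteType k C]
    {i : I} (g₁ g₂ : C →ₐ[k] A i) (h : (ι i).comp g₁ = (ι i).comp g₂) :
    ∃ j, ∃ hij : i ≤ j, (t i j hij).comp g₁ = (t i j hij).comp g₂ := by
  obtain ⟨s, hs⟩ := Algebra.FiniteType.out (R := k) (A := C)
  obtain ⟨j, hij, hj⟩ := hA.exists_trans_eq_of_finite (fun c : s => g₁ c) (fun c => g₂ c)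
    fun c => AlgHom.congr_fun h c
  exact ⟨j, hij, AlgHom.ext_of_adjoin_eq_top hs fun c hc => hj ⟨c, hc⟩⟩

theorem exists_factor_of_comp_eq {D C : Type*} [CommRing D] [Algebra k D]
    [Algebra.FiniteType k D] [CommRing C] [Algebra k C] [Algebra.FinitePresentation k C]
    (h : D →ₐ[k] C) (f : C →ₐ[k] B) (i₀ : I) (s : ∀ i, i₀ ≤ i → (D →ₐ[k] A i))
    (hs : ∀ i j (hi : i₀ ≤ i) (hij : i ≤ j), (t i j hij).comp (s i hi) = s j (hi.trans hij))
    (hsf : (ι i₀).comp (s i₀ le_rfl) = f.comp h) :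
    ∃ i, ∃ hi : i₀ ≤ i, ∃ g : C →ₐ[k] A i, (ι i).comp g = f ∧ g.comp h = s i hi := by
  obtain ⟨i₁, g₁, hg₁⟩ := hA.exists_factor f
  obtain ⟨i₂, hi₁, hi₀⟩ := directed_of (· ≤ ·) i₁ i₀
  have hι : (ι i₂).comp ((t i₁ i₂ hi₁).comp (g₁.comp h)) = (ι i₂).comp (s i₂ hi₀) := by
    rw [← AlgHom.comp_assoc, hA.comp_trans, ← AlgHom.comp_assoc, hg₁, ← hsf, ← hs i₀ i₂ le_rfl hi₀,
      ← AlgHom.comp_assoc, hA.comp_trans]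
  obtain ⟨i, hi₂, hi⟩ := hA.exists_trans_comp_eq _ _ hι
  refine ⟨i, hi₀.trans hi₂, (t i₁ i (hi₁.trans hi₂)).comp g₁, ?_, ?_⟩
  · rw [← AlgHom.comp_assoc, hA.comp_trans, hg₁]
  · rw [AlgHom.comp_assoc, ← hA.trans_comp_trans i₁ i₂ i hi₁ hi₂, AlgHom.comp_assoc, hi, hs]

end IsDirectedColimit

instance Set.Ici.isDirected {I : Type*} [Preorder I] [IsDirected I (· ≤ ·)] (c : I) :
    IsDirected (Set.Ici c) (· ≤ ·) where
  directed a b := by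
    obtain ⟨d, had, hbd⟩ := directed_of (· ≤ ·) a.1 b.1
    exact ⟨⟨d, a.2.trans had⟩, had, hbd⟩

theorem IsDirectedColimit.Ici {t : ∀ i j, i ≤ j → A i →ₐ[k] A j} {ι : ∀ i, A i →ₐ[k] B}
    (hA : IsDirectedColimit t ι) [IsDirected I (· ≤ ·)] (c : I) :
    IsDirectedColimit (fun (i j : Set.Ici c) h => t i j h) (fun i => ι i) where
  trans_comp_trans i j l := hA.trans_comp_trans i j l
  comp_trans i j := hA.comp_trans i j
  exists_eq b := by
    obtain ⟨i, x, rfl⟩ := hA.exists_eq b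
    obtain ⟨j, hij, hcj⟩ := directed_of (· ≤ ·) i c
    exact ⟨⟨j, hcj⟩, t i j hij x, hA.ι_trans_apply hij x⟩
  exists_trans_eq i x y hxy := by
    obtain ⟨j, hij, h⟩ := hA.exists_trans_eq i x y hxy
    exact ⟨⟨j, i.2.trans hij⟩, hij, h⟩

section Quotient

variable (t : ∀ i j, i ≤ j → A i →ₐ[k] A j) (ι : ∀ i, A i →ₐ[k] B)
  {m : Type*} (f : ∀ i, m → A i) (hf : ∀ i j (hij : i ≤ j) s, t i j hij (f i s) = f j s)
  {B' : Type*} [CommRing B'] [Algebra k B']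

noncomputable def quotientTrans (i j : I) (hij : i ≤ j) :
    A i ⧸ Ideal.span (Set.range (f i)) →ₐ[k] A j ⧸ Ideal.span (Set.range (f j)) :=
  Ideal.quotientMapₐ _ (t i j hij) <| Ideal.span_le.mpr <| Set.range_subset_iff.mpr fun s =>
    Ideal.mem_comap.mpr (hf i j hij s ▸ Ideal.subset_span ⟨s, rfl⟩)

noncomputable def quotientι (π : B →ₐ[k] B') (hπ : ∀ i s, π (ι i (f i s)) = 0) (i : I) :
    A i ⧸ Ideal.span (Set.range (f i)) →ₐ[k] B' :=
  Ideal.Quotient.liftₐ _ (π.comp (ι i)) fun _ ha =>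
    (Ideal.span_le (I := RingHom.ker (π.comp (ι i)))).mpr
      (Set.range_subset_iff.mpr fun s => hπ i s) ha

theorem quotientTrans_mk (i j : I) (hij : i ≤ j) (x : A i) :
    quotientTrans t f hf i j hij (Ideal.Quotient.mk _ x) = Ideal.Quotient.mk _ (t i j hij x) :=
  rfl

omit [Preorder I] in
theorem quotientι_mk (π : B →ₐ[k] B') (hπ : ∀ i s, π (ι i (f i s)) = 0) (i : I) (x : A i) :
    quotientι ι f π hπ i (Ideal.Quotient.mk _ x) = π (ι i x) :=
  rfl

variable {t ι} (hA : IsDirectedColimit t ι)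
include hA hf

theorem IsDirectedColimit.exists_trans_mem_span [IsDirected I (· ≤ ·)] [Nonempty I] [Finite m]
    {i i₀ : I} (x : A i) (hx : ι i x ∈ Ideal.span (Set.range fun s => ι i₀ (f i₀ s))) :
    ∃ j, ∃ hij : i ≤ j, t i j hij x ∈ Ideal.span (Set.range (f j)) := by
  cases nonempty_fintype m
  obtain ⟨c, hc⟩ := (Submodule.mem_span_range_iff_exists_fun _).mp hx
  obtain ⟨i₁, u, hu⟩ := hA.exists_eq_of_finite c
  obtain ⟨j, hj⟩ := (Set.toFinite {i, i₀, i₁}).bddAbove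
  have hij : i ≤ j := hj (by simp)
  have hi₀j : i₀ ≤ j := hj (by simp)
  have hi₁j : i₁ ≤ j := hj (by simp)
  obtain ⟨l, hjl, hl⟩ := hA.exists_trans_eq j (t i j hij x) (∑ s, t i₁ j hi₁j (u s) * f j s) <| by
    simp only [hA.ι_trans_apply, ← hc, map_sum, map_mul, hu, ← hf i₀ j hi₀j, smul_eq_mul]
  refine ⟨l, hij.trans hjl, ?_⟩
  rw [← hA.trans_trans_apply hij hjl, hl, map_sum]
  refine Ideal.sum_mem _ fun s _ => ?_
  rw [map_mul, hf]
  exact Ideal.mul_mem_left _ _ (Ideal.subset_span ⟨s, rfl⟩)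

theorem IsDirectedColimit.quotient [IsDirected I (· ≤ ·)] [Nonempty I] [Finite m]
    (π : B →ₐ[k] B') (hπs : Function.Surjective π) (hπ : ∀ i s, π (ι i (f i s)) = 0) (i₀ : I)
    (hker : RingHom.ker π.toRingHom ≤ Ideal.span (Set.range fun s => ι i₀ (f i₀ s))) :
    IsDirectedColimit (quotientTrans t f hf) (quotientι ι f π hπ) where
  trans_comp_trans i j l hij hjl := Ideal.Quotient.algHom_ext _ <| AlgHom.ext fun x => by
    simp [quotientTrans_mk, hA.trans_trans_apply]
  comp_trans i j hij := Ideal.Quotient.algHom_ext _ <| AlgHom.ext fun x => by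
    simp [quotientTrans_mk, quotientι_mk, hA.ι_trans_apply]
  exists_eq b' := by
    obtain ⟨b, rfl⟩ := hπs b'
    obtain ⟨i, x, rfl⟩ := hA.exists_eq b
    exact ⟨i, Ideal.Quotient.mk _ x, rfl⟩
  exists_trans_eq i x y hxy := by
    obtain ⟨x, rfl⟩ := Ideal.Quotient.mk_surjective x
    obtain ⟨y, rfl⟩ := Ideal.Quotient.mk_surjective y
    have hxy' : ι i (x - y) ∈ RingHom.ker π.toRingHom := by
      simpa [quotientι_mk, sub_eq_zero] using hxy
    obtain ⟨j, hij, hj⟩ := hA.exists_trans_mem_span f hf (x - y) (hker hxy')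
    exact ⟨j, hij, by simpa [quotientTrans_mk, Ideal.Quotient.eq] using hj⟩

end Quotient

end DirectedColimit

section SmoothnessWitness

variable {A : Type*} [CommRing A] {σ ι : Type*} [Fintype ι]

omit [Fintype ι] in
theorem Ideal.span_range_sq (f : ι → A) :
    Ideal.span (Set.range f) ^ 2 = Ideal.span (Set.range fun p : ι × ι => f p.1 * f p.2) := by
  rw [pow_two, Ideal.span_mul_span']
  congr 1
  ext x
  constructor
  · rintro ⟨_, ⟨i, rfl⟩, _, ⟨j, rfl⟩, rfl⟩
    exact ⟨(i, j), rfl⟩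
  · rintro ⟨⟨i, j⟩, rfl⟩
    exact Set.mul_mem_mul ⟨i, rfl⟩ ⟨j, rfl⟩

/- `smoothnessDefect f G a b = 0` says that `X ↦ G` induces a section `A[X]/(f) → A[X]/(f)²` of
the projection, which characterises formal smoothness of `A[X]/(f)`
(`Algebra.FormallySmooth.of_split`). With the coefficients `a`, `b` made explicit this is a finite
system of polynomial identities, so it can be transported along ring maps and descended along
directed colimits. -/
noncomputable def smoothnessDefect (f : ι → MvPolynomial σ A) (G : σ → MvPolynomial σ A)
    (a : σ → ι → MvPolynomial σ A) (b : ι → ι × ι → MvPolynomial σ A) :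
    σ ⊕ ι → MvPolynomial σ A :=
  Sum.elim (fun j => G j - X j - ∑ i, a j i * f i)
    (fun i => bind₁ G (f i) - ∑ p, b i p * (f p.1 * f p.2))

def HasSmoothnessWitness (f : ι → MvPolynomial σ A) : Prop :=
  ∃ G a b, smoothnessDefect f G a b = 0

theorem map_smoothnessDefect {A' : Type*} [CommRing A'] (φ : A →+* A')
    (f : ι → MvPolynomial σ A) (G : σ → MvPolynomial σ A) (a : σ → ι → MvPolynomial σ A)
    (b : ι → ι × ι → MvPolynomial σ A) (t : σ ⊕ ι) :
    map φ (smoothnessDefect f G a b t) =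
      smoothnessDefect (fun i => map φ (f i)) (fun j => map φ (G j)) (fun j i => map φ (a j i))
        (fun i p => map φ (b i p)) t := by
  cases t <;> simp [smoothnessDefect, map_bind₁]

theorem HasSmoothnessWitness.map {A' : Type*} [CommRing A'] (φ : A →+* A')
    {f : ι → MvPolynomial σ A} (hf : HasSmoothnessWitness f) :
    HasSmoothnessWitness fun i => map φ (f i) := by
  obtain ⟨G, a, b, h⟩ := hf
  exact ⟨_, _, _, funext fun t => by rw [← map_smoothnessDefect, h, Pi.zero_apply, map_zero]; rfl⟩

theorem HasSmoothnessWitness.formallySmooth {f : ι → MvPolynomial σ A}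
    (hf : HasSmoothnessWitness f) :
    Algebra.FormallySmooth A (MvPolynomial σ A ⧸ Ideal.span (Set.range f)) := by
  obtain ⟨G, a, b, h⟩ := hf
  set K := Ideal.span (Set.range f)
  have hG (j : σ) : G j - X j ∈ K := by
    have hj := congr_fun h (.inl j)
    simp only [smoothnessDefect, Sum.elim_inl, Pi.zero_apply, sub_eq_zero] at hj
    rw [hj]
    exact Ideal.sum_mem _ fun i _ => Ideal.mul_mem_left _ _ (Ideal.subset_span ⟨i, rfl⟩)
  have hB (i : ι) : bind₁ G (f i) ∈ RingHom.ker (Ideal.Quotient.mkₐ A K).toRingHom ^ 2 := by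
    have hi := congr_fun h (.inr i)
    simp only [smoothnessDefect, Sum.elim_inr, Pi.zero_apply, sub_eq_zero] at hi
    rw [AlgHom.toRingHom_eq_coe, Ideal.Quotient.mkₐ_ker, Ideal.span_range_sq, hi]
    exact Ideal.sum_mem _ fun p _ => Ideal.mul_mem_left _ _ (Ideal.subset_span ⟨p, rfl⟩)
  let s := (Ideal.Quotient.mkₐ A (RingHom.ker (Ideal.Quotient.mkₐ A K).toRingHom ^ 2)).comp
    (bind₁ G)
  have hs : ∀ x ∈ K, s x = 0 := fun x hx =>
    (Ideal.span_le (I := RingHom.ker s)).mpr (Set.range_subset_iff.mpr fun i =>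
      Ideal.Quotient.eq_zero_iff_mem.mpr (hB i)) hx
  refine Algebra.FormallySmooth.of_split _ (Ideal.Quotient.liftₐ K s hs) ?_
  refine Ideal.Quotient.algHom_ext _ (algHom_ext fun j => ?_)
  change Ideal.Quotient.mk K (bind₁ G (X j)) = Ideal.Quotient.mk K (X j)
  rw [bind₁_X_right, Ideal.Quotient.eq]
  exact hG j

theorem hasSmoothnessWitness_of_formallySmooth {T : Type*} [CommRing T] [Algebra A T]
    [Algebra.FormallySmooth A T] {f : ι → MvPolynomial σ A} (g : MvPolynomial σ A →ₐ[A] T)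
    (hg : Function.Surjective g) (hker : RingHom.ker g.toRingHom = Ideal.span (Set.range f)) :
    HasSmoothnessWitness f := by
  obtain ⟨s, hs⟩ := (Algebra.FormallySmooth.iff_split_surjection g hg).mp inferInstance
  choose G hG using fun j => Ideal.Quotient.mk_surjective (s (g (X j)))
  have hsG : (Ideal.Quotient.mkₐ A _).comp (bind₁ G) = s.comp g :=
    algHom_ext fun j => by
      rw [AlgHom.comp_apply, AlgHom.comp_apply, bind₁_X_right, Ideal.Quotient.mkₐ_eq_mk, hG]
  have hGX (j : σ) : G j - X j ∈ Ideal.span (Set.range f) := by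
    rw [← hker, RingHom.mem_ker, map_sub, sub_eq_zero]
    have hj := AlgHom.congr_fun hs (g (X j))
    rwa [AlgHom.comp_apply, ← hG, AlgHom.kerSquareLift_mk] at hj
  have hfG (i : ι) : bind₁ G (f i) ∈ Ideal.span (Set.range f) ^ 2 := by
    have hfi : g (f i) = 0 := by
      simpa using (hker ▸ Ideal.subset_span ⟨i, rfl⟩ : f i ∈ RingHom.ker g.toRingHom)
    rw [← hker, ← Ideal.Quotient.eq_zero_iff_mem]
    have hi := AlgHom.congr_fun hsG (f i)
    rwa [AlgHom.comp_apply, AlgHom.comp_apply, hfi, map_zero] at hi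
  rw [Ideal.span_range_sq] at hfG
  choose a ha using fun j => (Submodule.mem_span_range_iff_exists_fun _).mp (hGX j)
  choose b hb using fun i => (Submodule.mem_span_range_iff_exists_fun _).mp (hfG i)
  refine ⟨G, a, b, funext fun t => ?_⟩
  cases t <;> simp [smoothnessDefect, ← ha, ← hb]

end SmoothnessWitness

theorem RingHom.FormallySmooth.of_comp_eq {A B C W : Type*} [CommRing A] [CommRing B]
    [CommRing C] [CommRing W] {f : A →+* B} {g : B →+* C} {q : B →+* W} {v : W →+* C}
    (hg : g.FormallySmooth) (hqf : (q.comp f).FormallySmooth) (hv : v.comp q = g) :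
    (g.comp f).FormallySmooth := by
  let := f.toAlgebra
  let := g.toAlgebra
  let : Algebra A C := (g.comp f).toAlgebra
  let : Algebra A W := (q.comp f).toAlgebra
  have : Algebra.FormallySmooth B C := hg
  have : Algebra.FormallySmooth A W := hqf
  show Algebra.FormallySmooth A C
  refine .of_comp_surjective fun D _ _ I hI c => ?_
  let v' : W →ₐ[A] C := { v with commutes' := fun a => congr_arg (· (f a)) hv }
  obtain ⟨w, hw⟩ := Algebra.FormallySmooth.comp_surjective A W I hI (c.comp v')
  let : Algebra B D := (w.toRingHom.comp q).toAlgebra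
  let c' : C →ₐ[B] D ⧸ I :=
    { c with
      commutes' := fun b => by
        rw [RingHom.algebraMap_toAlgebra, ← hv]
        exact (AlgHom.congr_fun hw (q b)).symm }
  obtain ⟨d, hd⟩ := Algebra.FormallySmooth.comp_surjective B C I hI c'
  refine ⟨{ d with commutes' := fun a => ?_ }, AlgHom.ext fun x => AlgHom.congr_fun hd x⟩
  exact (d.commutes (f a)).trans (w.commutes a)

namespace IsDirectedColimit

universe u

variable {k : Type*} [CommRing k] {I : Type*} [Preorder I] [IsDirected I (· ≤ ·)] [Nonempty I]
  {A : I → Type u} [∀ i, CommRing (A i)] [∀ i, Algebra k (A i)]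
  {B : Type*} [CommRing B] [Algebra k B]
  {t : ∀ i j, i ≤ j → A i →ₐ[k] A j} {ι : ∀ i, A i →ₐ[k] B}

theorem exists_hasSmoothnessWitness (hA : IsDirectedColimit t ι) {σ κ : Type*} [Finite σ]
    [Fintype κ] {F : κ → MvPolynomial σ B} (hF : HasSmoothnessWitness F) :
    ∃ i, ∃ f : κ → MvPolynomial σ (A i), (∀ s, map (ι i) (f s) = F s) ∧
      HasSmoothnessWitness f := by
  obtain ⟨G, a, b, h⟩ := hF
  have hP := hA.mvPolynomial σ
  obtain ⟨i, x, hx⟩ := hP.exists_eq_of_finite <| Sum.elim F <| Sum.elim G <|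
    Sum.elim (fun p : σ × κ => a p.1 p.2) (fun p : κ × (κ × κ) => b p.1 p.2)
  simp only [mapAlgHom_apply] at hx
  let f' (s : κ) := x (.inl s)
  let G' (l : σ) := x (.inr (.inl l))
  let a' (l : σ) (s : κ) := x (.inr (.inr (.inl (l, s))))
  let b' (s : κ) (p : κ × κ) := x (.inr (.inr (.inr (s, p))))
  obtain ⟨j, hij, hj⟩ := hP.exists_trans_eq_of_finite (smoothnessDefect f' G' a' b') 0
    fun u => by simp [f', G', a', b', mapAlgHom_apply, map_smoothnessDefect, hx, h]
  let τ : A i →+* A j := t i j hij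
  refine ⟨j, fun s => map τ (f' s), fun s => ?_, fun l => map τ (G' l), fun l s => map τ (a' l s),
    fun s p => map τ (b' s p), funext fun u => ?_⟩
  · simpa only [mapAlgHom_apply, hx, Sum.elim_inl] using hP.ι_trans_apply hij (x (.inl s))
  · simpa [mapAlgHom_apply, map_smoothnessDefect] using hj u

theorem exists_smooth_trans_comp (hA : IsDirectedColimit t ι)
    (ht : ∀ i j (hij : i ≤ j), (t i j hij).toRingHom.FormallySmooth)
    [∀ i, Algebra.FinitePresentation k (A i)] {D W : Type*} [CommRing D] [Algebra k D]
    [Algebra.FiniteType k D] [CommRing W] [Algebra k W] [Algebra.FinitePresentation k W] {i : I}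
    (h : D →ₐ[k] A i) (w : D →ₐ[k] W) (hw : w.toRingHom.FormallySmooth) (q : A i →ₐ[k] W)
    (hq : q.comp h = w) (ω : W →ₐ[k] B) (hω : ω.comp q = ι i) :
    ∃ j, ∃ hij : i ≤ j, ((t i j hij).comp h).toRingHom.Smooth := by
  obtain ⟨j, hij, v, -, hv⟩ := hA.exists_factor_of_comp_eq q ω i (fun j hij => t i j hij)
    (fun j l hij hjl => hA.trans_comp_trans i j l hij hjl) (by rw [hA.comp_trans, hω])
  refine ⟨j, hij, RingHom.smooth_def.mpr ⟨?_, ?_⟩⟩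
  · exact .of_comp_eq (ht i j hij) (by rwa [← hq] at hw) (congr_arg AlgHom.toRingHom hv)
  · refine .of_comp_finiteType (algebraMap k D) ?_ (RingHom.finiteType_algebraMap.mpr inferInstance)
    rw [AlgHom.toRingHom_eq_coe, AlgHom.comp_algebraMap]
    exact RingHom.finitePresentation_algebraMap.mpr inferInstance

theorem exists_smooth_model (hA : IsDirectedColimit t ι)
    (ht : ∀ i j (hij : i ≤ j), (t i j hij).toRingHom.FormallySmooth)
    [∀ i, Algebra.FinitePresentation k (A i)] {T : Type*} [CommRing T] [Algebra k T]
    [Algebra B T] [IsScalarTower k B T] [Algebra.Smooth B T] {E : Type*} [CommRing E]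
    [Algebra k E] [Algebra.FinitePresentation k E] {i : I} (h : A i →ₐ[k] E) (q : E →ₐ[k] T)
    (hq : q.comp h = (IsScalarTower.toAlgHom k B T).comp (ι i)) :
    ∃ (W : Type u) (_ : CommRing W) (_ : Algebra k W), Algebra.FinitePresentation k W ∧
      ∃ (w : A i →ₐ[k] W) (q' : E →ₐ[k] W) (ω : W →ₐ[k] T),
        w.toRingHom.FormallySmooth ∧ q'.comp h = w ∧ ω.comp q' = q := by
  obtain ⟨n, g, hg, hfg⟩ := Algebra.FinitePresentation.out (R := B) (A := T)
  obtain ⟨m, F, hF⟩ := Submodule.fg_iff_exists_fin_generating_family.mp hfg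
  obtain ⟨c, f, hf, hfS⟩ := hA.exists_hasSmoothnessWitness
    (hasSmoothnessWitness_of_formallySmooth g hg hF.symm)
  -- the models `W_d = A_d[X]/(f)`, `d ≥ c`, of `T = B[X]/(F)`
  let fW (d : Set.Ici c) (r : Fin m) : MvPolynomial (Fin n) (A d) :=
    map (t c d d.2 : A c →+* A d) (f r)
  have hfW (d e : Set.Ici c) (hde : d ≤ e) (r : Fin m) :
      mapAlgHom (t d e hde) (fW d r) = fW e r := by
    simp only [mapAlgHom_apply, fW, map_map]
    exact congr_arg (map · _) (RingHom.ext (hA.trans_trans_apply _ _))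
  have hfι (d : Set.Ici c) (r : Fin m) : mapAlgHom (ι d) (fW d r) = F r := by
    simp only [mapAlgHom_apply, fW, map_map, ← hf r]
    exact congr_arg (map · _) (RingHom.ext (hA.ι_trans_apply _))
  let π : MvPolynomial (Fin n) B →ₐ[k] T := g.restrictScalars k
  have hπ (d : Set.Ici c) (r : Fin m) : π (mapAlgHom (ι d) (fW d r)) = 0 := by
    rw [hfι]
    simpa [π] using (hF ▸ Ideal.subset_span ⟨r, rfl⟩ : F r ∈ RingHom.ker g.toRingHom)
  have hW := ((hA.mvPolynomial (Fin n)).Ici c).quotient fW hfW π hg hπ ⟨c, le_refl c⟩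
    (hF.symm.le.trans (le_of_eq (congr_arg _ (congr_arg _ (funext fun r => (hfι _ r).symm)))))
  obtain ⟨d₀, hcd₀, hid₀⟩ := directed_of (· ≤ ·) c i
  let str (d : Set.Ici c) (hd : ⟨d₀, hcd₀⟩ ≤ d) :
      A i →ₐ[k] MvPolynomial (Fin n) (A d) ⧸ Ideal.span (Set.range (fW d)) :=
    (IsScalarTower.toAlgHom k (A d) _).comp (t i d (hid₀.trans hd))
  obtain ⟨d, hd, q', hq'ω, hq'h⟩ := hW.exists_factor_of_comp_eq h q ⟨d₀, hcd₀⟩ str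
    (fun d e hd hde => AlgHom.ext fun x => by
      change quotientTrans _ fW hfW d e hde (Ideal.Quotient.mk _ (C (t i d _ x))) =
        Ideal.Quotient.mk _ (C (t i e _ x))
      rw [quotientTrans_mk, mapAlgHom_apply, map_C, RingHom.coe_coe, hA.trans_trans_apply])
    (by
      rw [hq]
      ext x
      change quotientι _ fW π hπ ⟨d₀, hcd₀⟩ (Ideal.Quotient.mk _ (C (t i d₀ hid₀ x))) = _
      simp [quotientι_mk, π, hA.ι_trans_apply])
  have : Algebra.FinitePresentation (A d)
      (MvPolynomial (Fin n) (A d) ⧸ Ideal.span (Set.range (fW d))) :=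
    .quotient (Submodule.fg_span (Set.finite_range _))
  refine ⟨_, inferInstance, inferInstance, .trans k (A d) _, str d hd, q', _, ?_, hq'h, hq'ω⟩
  exact (ht i d _).comp (RingHom.formallySmooth_algebraMap.mpr ((hfS.map _).formallySmooth))

end IsDirectedColimit

theorem isSmoothHom_iff {R S : Type} [CommRing R] [CommRing S] (f : R →+* S) :
    IsSmoothHom f ↔ f.Smooth :=
  RingHom.smooth_def.symm

attribute [instance] DirectedColimitPresentation.pre DirectedColimitPresentation.dir
  DirectedColimitPresentation.ne DirectedColimitPresentation.ring

namespace DirectedColimitPresentation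

variable {k R A : Type} [CommRing k] [CommRing R] [CommRing A] [Algebra k R] [Algebra k A]
  {φ : R →ₐ[k] A} (P : DirectedColimitPresentation R A φ.toRingHom)

instance algebraObj (i : P.I) : Algebra k (P.obj i) :=
  ((P.str i).comp (algebraMap k R)).toAlgebra

def strₐ (i : P.I) : R →ₐ[k] P.obj i :=
  { P.str i with commutes' := fun _ => rfl }

def transₐ (i j : P.I) (h : i ≤ j) : P.obj i →ₐ[k] P.obj j :=
  { P.trans i j h with commutes' := fun _ => RingHom.congr_fun (P.str_compat i j h) _ }

def insₐ (i : P.I) : P.obj i →ₐ[k] A :=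
  { P.ins i with commutes' := fun r => (RingHom.congr_fun (P.ins_str i) _).trans (φ.commutes r) }

theorem isDirectedColimit : IsDirectedColimit P.transₐ P.insₐ where
  trans_comp_trans i j l hij hjl := AlgHom.coe_ringHom_injective (P.trans_comp i j l hij hjl)
  comp_trans i j hij := AlgHom.coe_ringHom_injective (P.ins_compat i j hij)
  exists_eq := P.jointly_surjective
  exists_trans_eq := P.eventually_eq

theorem transₐ_comp_strₐ (i j : P.I) (h : i ≤ j) : (P.transₐ i j h).comp (P.strₐ i) = P.strₐ j :=
  AlgHom.coe_ringHom_injective (P.str_compat i j h)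

theorem insₐ_comp_strₐ (i : P.I) : (P.insₐ i).comp (P.strₐ i) = φ :=
  AlgHom.coe_ringHom_injective (P.ins_str i)

end DirectedColimitPresentation

theorem statement8_general (k : Type) [Field k]
    (S : Type) [CommRing S] [Algebra k S] (R : Type) [CommRing R] [Algebra k R]
    -- a placid presentation `S = colim_{α ∈ I} S_α`
    (I : Type) [Preorder I] [IsDirected I (· ≤ ·)] [Nonempty I]
    (Sa : I → Type) [∀ i, CommRing (Sa i)] [∀ i, Algebra k (Sa i)]
    (tS : ∀ i j : I, i ≤ j → (Sa i →ₐ[k] Sa j)) (ιS : ∀ i, Sa i →ₐ[k] S)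
    (htS_comp : ∀ (i j l : I) (hij : i ≤ j) (hjl : j ≤ l),
      (tS j l hjl).comp (tS i j hij) = tS i l (le_trans hij hjl))
    (hιS : ∀ (i j : I) (hij : i ≤ j), (ιS j).comp (tS i j hij) = ιS i)
    (hftS : ∀ i, Algebra.FiniteType k (Sa i))
    (hsmS : ∀ (i j : I) (hij : i ≤ j), IsSmoothHom (tS i j hij).toRingHom)
    (hsurjS : ∀ s : S, ∃ i x, ιS i x = s)
    (heqS : ∀ (i : I) (x y : Sa i), ιS i x = ιS i y →
      ∃ j, ∃ hij : i ≤ j, tS i j hij x = tS i j hij y)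
    -- a placid presentation `R = colim_{β ∈ J} R_β`
    (J : Type) [Preorder J] [IsDirected J (· ≤ ·)] [Nonempty J]
    (Rb : J → Type) [∀ b, CommRing (Rb b)] [∀ b, Algebra k (Rb b)]
    (tR : ∀ b c : J, b ≤ c → (Rb b →ₐ[k] Rb c)) (ιR : ∀ b, Rb b →ₐ[k] R)
    (htR_comp : ∀ (b c d : J) (hbc : b ≤ c) (hcd : c ≤ d),
      (tR c d hcd).comp (tR b c hbc) = tR b d (le_trans hbc hcd))
    (hιR : ∀ (b c : J) (hbc : b ≤ c), (ιR c).comp (tR b c hbc) = ιR b)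
    (hftR : ∀ b, Algebra.FiniteType k (Rb b))
    (hsmR : ∀ (b c : J) (hbc : b ≤ c), IsSmoothHom (tR b c hbc).toRingHom)
    (hsurjR : ∀ r : R, ∃ b x, ιR b x = r)
    (heqR : ∀ (b : J) (x y : Rb b), ιR b x = ιR b y →
      ∃ c, ∃ hbc : b ≤ c, tR b c hbc x = tR b c hbc y)
    -- a strongly pro-smooth `k`-algebra homomorphism `φ : R → S`
    (φ : R →ₐ[k] S) (hφ : IsStronglyProSmooth φ.toRingHom) :
    ∀ β : J, ∃ α₀ : I, ∀ α : I, α₀ ≤ α →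
      ∃ h : Rb β →ₐ[k] Sa α, IsSmoothHom h.toRingHom ∧
        (ιS α).comp h = φ.comp (ιR β) := by
  intro β
  obtain ⟨P⟩ := hφ
  have hS : IsDirectedColimit tS ιS := ⟨htS_comp, hιS, hsurjS, heqS⟩
  have hR : IsDirectedColimit tR ιR := ⟨htR_comp, hιR, hsurjR, heqR⟩
  have (i : I) : Algebra.FinitePresentation k (Sa i) :=
    Algebra.FinitePresentation.of_finiteType.mp (hftS i)
  have (b : J) : Algebra.FinitePresentation k (Rb b) :=
    Algebra.FinitePresentation.of_finiteType.mp (hftR b)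
  obtain ⟨α₁, h₁, hh₁⟩ := hS.exists_factor (φ.comp (ιR β))
  obtain ⟨δ, -, q, hqι, hqh⟩ := P.isDirectedColimit.exists_factor_of_comp_eq h₁ (ιS α₁)
    (Classical.arbitrary _) (fun γ _ => (P.strₐ γ).comp (ιR β))
    (fun _ _ _ _ => by rw [← AlgHom.comp_assoc, P.transₐ_comp_strₐ])
    (by rw [← AlgHom.comp_assoc, P.insₐ_comp_strₐ, hh₁])
  let _ : Algebra R (P.obj δ) := (P.str δ).toAlgebra
  have : IsScalarTower k R (P.obj δ) := .of_algebraMap_eq' rfl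
  have : Algebra.Smooth R (P.obj δ) := (isSmoothHom_iff _).mp (P.str_smooth δ)
  obtain ⟨W, _, _, _, w, q', ω, hw, hq'h, hωq'⟩ := hR.exists_smooth_model
    (fun b c h => ((isSmoothHom_iff _).mp (hsmR b c h)).formallySmooth) h₁ q hqh
  obtain ⟨α₃, hα₁₃, hsm⟩ := hS.exists_smooth_trans_comp
    (fun i j h => ((isSmoothHom_iff _).mp (hsmS i j h)).formallySmooth) h₁ w hw q' hq'h
    ((P.insₐ δ).comp ω) (by rw [AlgHom.comp_assoc, hωq', hqι])
  refine ⟨α₃, fun α hα => ⟨(tS α₃ α hα).comp ((tS α₁ α₃ hα₁₃).comp h₁),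
    (isSmoothHom_iff _).mpr (hsm.comp ((isSmoothHom_iff _).mp (hsmS α₃ α hα))), ?_⟩⟩
  rw [← AlgHom.comp_assoc, hιS, ← AlgHom.comp_assoc, hιS, hh₁]

theorem statement8 (k : Type) [Field k]
    (S : Type) [CommRing S] [Algebra k S] (R : Type) [CommRing R] [Algebra k R]
    -- a placid presentation `S = colim_{α ∈ I} S_α`
    (I : Type) [Preorder I] [IsDirected I (· ≤ ·)] [Nonempty I]
    (Sa : I → Type) [∀ i, CommRing (Sa i)] [∀ i, Algebra k (Sa i)]
    (tS : ∀ i j : I, i ≤ j → (Sa i →ₐ[k] Sa j)) (ιS : ∀ i, Sa i →ₐ[k] S)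
    (htS_refl : ∀ i, tS i i le_rfl = AlgHom.id k (Sa i))
    (htS_comp : ∀ (i j l : I) (hij : i ≤ j) (hjl : j ≤ l),
      (tS j l hjl).comp (tS i j hij) = tS i l (le_trans hij hjl))
    (hιS : ∀ (i j : I) (hij : i ≤ j), (ιS j).comp (tS i j hij) = ιS i)
    (hftS : ∀ i, Algebra.FiniteType k (Sa i))
    (hsmS : ∀ (i j : I) (hij : i ≤ j), IsSmoothHom (tS i j hij).toRingHom)
    (hsurjS : ∀ s : S, ∃ i x, ιS i x = s)
    (heqS : ∀ (i : I) (x y : Sa i), ιS i x = ιS i y →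
      ∃ j, ∃ hij : i ≤ j, tS i j hij x = tS i j hij y)
    -- a placid presentation `R = colim_{β ∈ J} R_β`
    (J : Type) [Preorder J] [IsDirected J (· ≤ ·)] [Nonempty J]
    (Rb : J → Type) [∀ b, CommRing (Rb b)] [∀ b, Algebra k (Rb b)]
    (tR : ∀ b c : J, b ≤ c → (Rb b →ₐ[k] Rb c)) (ιR : ∀ b, Rb b →ₐ[k] R)
    (htR_refl : ∀ b, tR b b le_rfl = AlgHom.id k (Rb b))
    (htR_comp : ∀ (b c d : J) (hbc : b ≤ c) (hcd : c ≤ d),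
      (tR c d hcd).comp (tR b c hbc) = tR b d (le_trans hbc hcd))
    (hιR : ∀ (b c : J) (hbc : b ≤ c), (ιR c).comp (tR b c hbc) = ιR b)
    (hftR : ∀ b, Algebra.FiniteType k (Rb b))
    (hsmR : ∀ (b c : J) (hbc : b ≤ c), IsSmoothHom (tR b c hbc).toRingHom)
    (hsurjR : ∀ r : R, ∃ b x, ιR b x = r)
    (heqR : ∀ (b : J) (x y : Rb b), ιR b x = ιR b y →
      ∃ c, ∃ hbc : b ≤ c, tR b c hbc x = tR b c hbc y)
    -- a strongly pro-smooth `k`-algebra homomorphism `φ : R → S`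
    (φ : R →ₐ[k] S) (hφ : IsStronglyProSmooth φ.toRingHom) :
    ∀ β : J, ∃ α₀ : I, ∀ α : I, α₀ ≤ α →
      ∃ h : Rb β →ₐ[k] Sa α, IsSmoothHom h.toRingHom ∧
        (ιS α).comp h = φ.comp (ιR β) :=
  statement8_general k S R I Sa tS ιS htS_comp hιS hftS hsmS hsurjS heqS J Rb tR ιR htR_comp hιR
    hftR hsmR hsurjR heqR φ hφ
end

section
/- Let X be a profinite topological space (compact, Hausdorff and totally disconnected), let A be a commutative ring, and let M be an A-module. Then the A-linear map LC(X, A) ⊗_A M → LC(X, M), determined by sending f ⊗ m to the function x ↦ f(x) • m, is bijective. Here LC(X, N) denotes the set of locally constant functions from X to N (equivalently, continuous functions when N carries the discrete topology), LC(X, A) is a commutative A-algebra under pointwise operations, and LC(X, M) is a module over A via pointwise scalar multiplication. -/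
open TensorProduct

/-- The `A`-bilinear map sending `f : LC(X, A)` and `m : M` to the locally constant function
`x ↦ f x • m` in `LC(X, M)`. -/
def lcSmulBilin (X : Type) [TopologicalSpace X] (A : Type) [CommRing A]
    (M : Type) [AddCommGroup M] [Module A M] :
    LocallyConstant X A →ₗ[A] M →ₗ[A] LocallyConstant X M where
  toFun f :=
    { toFun := fun m => f.map (fun a => a • m)
      map_add' := fun m m' => by
        ext x
        simp [smul_add]
      map_smul' := fun a m => by
        ext x
        simp only [LocallyConstant.map_apply, LocallyConstant.coe_smul, Pi.smul_apply,
          RingHom.id_apply, Function.comp_apply]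
        rw [smul_smul, smul_smul, mul_comm] }
  map_add' f g := by
    ext m x
    simp [add_smul]
  map_smul' a f := by
    ext m x
    simp [mul_smul]

/-- The natural `A`-linear map `LC(X, A) ⊗[A] M → LC(X, M)`, determined by sending
`f ⊗ m` to the function `x ↦ f x • m`. -/
noncomputable def lcTensorMap (X : Type) [TopologicalSpace X] (A : Type) [CommRing A]
    (M : Type) [AddCommGroup M] [Module A M] :
    LocallyConstant X A ⊗[A] M →ₗ[A] LocallyConstant X M :=
  TensorProduct.lift (lcSmulBilin X A M)

section Aux

open scoped Classical
noncomputable section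

variable (X : Type) [TopologicalSpace X] (A : Type) [CommRing A]
    (M : Type) [AddCommGroup M] [Module A M]

/-- Indicator function of a fiber of a discrete quotient. -/
def eFn (S : DiscreteQuotient X) (s : S) : LocallyConstant X A :=
  ⟨fun x => if S.proj x = s then 1 else 0,
   S.proj_isLocallyConstant.comp (fun t => if t = s then (1:A) else 0)⟩

@[simp] lemma eFn_apply (S : DiscreteQuotient X) (s : S) (x : X) :
    eFn X A S s x = if S.proj x = s then 1 else 0 := rfl

lemma lc_sum_apply {ι : Type*} (F : Finset ι) (f : ι → LocallyConstant X M) (x : X) :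
    (∑ i ∈ F, f i) x = ∑ i ∈ F, f i x := by
  rw [← LocallyConstant.coeFnAddMonoidHom_apply, map_sum]
  simp [Finset.sum_apply]

lemma eFn_sum {S T : DiscreteQuotient X} [Fintype S] (h : S ≤ T) (t : T) :
    ∑ s ∈ Finset.univ.filter (fun s => DiscreteQuotient.ofLE h s = t), eFn X A S s
      = eFn X A T t := by
  ext x
  rw [lc_sum_apply]
  simp only [eFn_apply]
  simp only [Finset.sum_ite_eq, Finset.mem_filter, Finset.mem_univ, true_and]
  rw [← DiscreteQuotient.ofLE_proj h x]

lemma regroup [CompactSpace X] {S T : DiscreteQuotient X} (h : S ≤ T) (m : T → M) :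
    ∑ᶠ t, eFn X A T t ⊗ₜ[A] m t
      = ∑ᶠ s, eFn X A S s ⊗ₜ[A] m (DiscreteQuotient.ofLE h s) := by
  haveI : Fintype S := Fintype.ofFinite S
  haveI : Fintype T := Fintype.ofFinite T
  rw [finsum_eq_sum_of_fintype, finsum_eq_sum_of_fintype]
  rw [← Finset.sum_fiberwise Finset.univ (DiscreteQuotient.ofLE h)
    (fun s => eFn X A S s ⊗ₜ[A] m (DiscreteQuotient.ofLE h s))]
  refine Finset.sum_congr rfl fun t _ => ?_
  rw [← eFn_sum X A h t, TensorProduct.sum_tmul]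
  refine Finset.sum_congr rfl fun s hs => ?_
  rw [(Finset.mem_filter.mp hs).2]

lemma lcRepr [CompactSpace X] (t : LocallyConstant X A ⊗[A] M) :
    ∃ (S : DiscreteQuotient X) (m : S → M),
      t = ∑ᶠ s, eFn X A S s ⊗ₜ[A] m s := by
  induction t using TensorProduct.induction_on with
  | zero => exact ⟨⊤, 0, by simp⟩
  | tmul f m₀ =>
    refine ⟨f.discreteQuotient, fun s => f.lift s • m₀, ?_⟩
    haveI : Fintype f.discreteQuotient := Fintype.ofFinite _
    rw [finsum_eq_sum_of_fintype]
    have : ∀ s, eFn X A f.discreteQuotient s ⊗ₜ[A] (f.lift s • m₀)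
        = (f.lift s • eFn X A f.discreteQuotient s) ⊗ₜ[A] m₀ := fun s => by
      rw [TensorProduct.smul_tmul]
    simp only [this]
    rw [← TensorProduct.sum_tmul]
    congr 1
    ext x
    rw [lc_sum_apply]
    simp only [LocallyConstant.coe_smul, Pi.smul_apply, eFn_apply, smul_ite, smul_zero]
    rw [Finset.sum_ite_eq Finset.univ (f.discreteQuotient.proj x)
      (fun s => f.lift s • (1:A))]
    simp only [Finset.mem_univ, if_true, smul_eq_mul, mul_one]
    exact congrFun f.lift_comp_proj x
  | add t₁ t₂ h₁ h₂ =>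
    obtain ⟨S₁, m₁, rfl⟩ := h₁
    obtain ⟨S₂, m₂, rfl⟩ := h₂
    refine ⟨S₁ ⊓ S₂, fun s => m₁ (DiscreteQuotient.ofLE inf_le_left s)
      + m₂ (DiscreteQuotient.ofLE inf_le_right s), ?_⟩
    rw [regroup X A M (inf_le_left : S₁ ⊓ S₂ ≤ S₁) m₁,
      regroup X A M (inf_le_right : S₁ ⊓ S₂ ≤ S₂) m₂]
    haveI : Fintype (S₁ ⊓ S₂ : DiscreteQuotient X) := Fintype.ofFinite _
    rw [finsum_eq_sum_of_fintype, finsum_eq_sum_of_fintype, finsum_eq_sum_of_fintype,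
      ← Finset.sum_add_distrib]
    exact Finset.sum_congr rfl fun s _ => (TensorProduct.tmul_add _ _ _).symm

@[simp] lemma lcTensorMap_tmul_apply (f : LocallyConstant X A) (m : M) (x : X) :
    lcTensorMap X A M (f ⊗ₜ[A] m) x = f x • m := rfl


end

end Aux

theorem statement13 (X : Type) [TopologicalSpace X] [CompactSpace X] [T2Space X]
    [TotallyDisconnectedSpace X]
    (A : Type) [CommRing A] (M : Type) [AddCommGroup M] [Module A M] :
    Function.Bijective (lcTensorMap X A M) := by
  classical
  constructor
  · rw [injective_iff_map_eq_zero]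
    intro t ht
    obtain ⟨S, m, rfl⟩ := lcRepr X A M t
    haveI : Fintype S := Fintype.ofFinite S
    rw [finsum_eq_sum_of_fintype] at ht ⊢
    have hm : ∀ s, m s = 0 := by
      intro s
      obtain ⟨x, hx⟩ := S.proj_surjective s
      have h0 : (lcTensorMap X A M (∑ s, eFn X A S s ⊗ₜ[A] m s)) x = 0 := by
        rw [ht]; rfl
      rw [map_sum, lc_sum_apply] at h0
      simp only [lcTensorMap_tmul_apply, eFn_apply, ite_smul, one_smul, zero_smul] at h0
      rwa [Finset.sum_ite_eq Finset.univ (S.proj x) m, if_pos (Finset.mem_univ _), hx] at h0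
    simp [hm]
  · intro g
    haveI : Fintype g.discreteQuotient := Fintype.ofFinite _
    refine ⟨∑ s, eFn X A g.discreteQuotient s ⊗ₜ[A] g.lift s, ?_⟩
    rw [map_sum]
    ext x
    rw [lc_sum_apply]
    simp only [lcTensorMap_tmul_apply, eFn_apply, ite_smul, one_smul, zero_smul]
    rw [Finset.sum_ite_eq Finset.univ (g.discreteQuotient.proj x) g.lift,
      if_pos (Finset.mem_univ _)]
    exact congrFun g.lift_comp_proj x
end

section
/- Let k be a field and let A be a commutative k-algebra admitting two presentations A = colim_{α∈I} A_α and A = colim_{β∈J} A′_β as colimits of directed systems, indexed by directed preordered sets, of finite-type commutative k-algebras in which all transition homomorphisms induce universally open morphisms on prime spectra. Then for every β ∈ J there exists α₀ ∈ I such that for every α ≥ α₀ there is a k-algebra homomorphism g : A′_β → A_α whose composition with the canonical map A_α → A equals the canonical map A′_β → A and which induces a universally open morphism Spec A_α → Spec A′_β. -/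
/-!
Lift `A′_β → A` to some `g₀ : A′_β → A_α'`; since `A_α'` is finitely presented, lift
`A_α' → A` back to `f : A_α' → A′_γ` with `f ∘ g₀ = t′_{βγ}` after enlarging `γ`, and
once more to `s : A′_γ → A_α` with `s ∘ f = t_{α'α}` for all large `α`. The desired map
is `g = s ∘ t′_{βγ} = s ∘ f ∘ g₀`. On spectra both `Spec f ∘ Spec s` and
`Spec g₀ ∘ Spec f` are universally open transition maps, and this already forces
`Spec g₀ ∘ Spec f ∘ Spec s` to be universally open:
`(h ∘ g ∘ f)(U) = (h ∘ g)(g⁻¹((g ∘ f)(U)))` for continuous `g`.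
-/

open AlgebraicGeometry CategoryTheory

/-- A homomorphism of commutative rings `g : R →+* S` induces a universally open morphism on
prime spectra if the associated morphism of affine schemes `Spec S ⟶ Spec R` is universally
open, i.e. every base change of it along an arbitrary morphism of schemes is an open map on
underlying topological spaces. -/
def InducesUniversallyOpenSpec {R S : Type} [CommRing R] [CommRing S] (g : R →+* S) : Prop :=
  (topologically @IsOpenMap).universally (Spec.map (CommRingCat.ofHom g))

open Limits MorphismProperty Filter

theorem IsOpenMap.comp_of_comp_of_comp {X Y Z W : Type*} [TopologicalSpace X]
    [TopologicalSpace Y] [TopologicalSpace Z] [TopologicalSpace W]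
    {f : X → Y} {g : Y → Z} {h : Z → W} (hg : Continuous g)
    (hgf : IsOpenMap (g ∘ f)) (hhg : IsOpenMap (h ∘ g)) : IsOpenMap (h ∘ g ∘ f) := by
  intro U hU
  have hsub : (g ∘ f) '' U ⊆ Set.range g := Set.image_comp g f U ▸ Set.image_subset_range g _
  have := hhg _ ((hgf U hU).preimage hg)
  rwa [Set.image_comp, Set.image_preimage_eq_of_subset hsub, ← Set.image_comp,
    ← Function.comp_assoc] at this

namespace AlgebraicGeometry

theorem isOpenMap_pullback_fst_comp_comp {X Y Z W T : Scheme}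
    (f : X ⟶ Y) (g : Y ⟶ Z) (h : Z ⟶ W) [UniversallyOpen (f ≫ g)]
    [UniversallyOpen (g ≫ h)] (i : T ⟶ W) : IsOpenMap (pullback.fst i (f ≫ g ≫ h)) := by
  let a : pullback i (f ≫ g ≫ h) ⟶ pullback i (g ≫ h) :=
    pullback.lift (pullback.fst _ _) (pullback.snd _ _ ≫ f) (by simp [pullback.condition])
  let b : pullback i (g ≫ h) ⟶ pullback i h :=
    pullback.lift (pullback.fst _ _) (pullback.snd _ _ ≫ g) (by simp [pullback.condition])
  have ha : a ≫ pullback.fst i (g ≫ h) = pullback.fst i (f ≫ g ≫ h) :=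
    pullback.lift_fst _ _ _
  have hb : b ≫ pullback.fst i h = pullback.fst i (g ≫ h) := pullback.lift_fst _ _ _
  have hab : IsPullback (a ≫ b) (pullback.snd _ _) (pullback.snd i h) (f ≫ g) := by
    refine IsPullback.of_right ?_ ?_ (IsPullback.of_hasPullback i h)
    · rw [Category.assoc, hb, ha, Category.assoc]
      exact IsPullback.of_hasPullback i _
    · simp only [a, b, Category.assoc, pullback.lift_snd, pullback.lift_snd_assoc]
  have : UniversallyOpen (a ≫ b) := of_isPullback hab.flip inferInstance
  have hbfst := (pullback.fst i (g ≫ h)).isOpenMap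
  rw [← hb] at hbfst
  rw [← ha, ← hb]
  exact IsOpenMap.comp_of_comp_of_comp b.continuous (a ≫ b).isOpenMap hbfst

theorem UniversallyOpen.comp_of_comp_of_comp {X Y Z W : Scheme}
    (f : X ⟶ Y) (g : Y ⟶ Z) (h : Z ⟶ W) [UniversallyOpen (f ≫ g)]
    [UniversallyOpen (g ≫ h)] :
    UniversallyOpen (f ≫ g ≫ h) :=
  ⟨universally_mk' _ _ fun i _ => isOpenMap_pullback_fst_comp_comp f g h i⟩

end AlgebraicGeometry

theorem InducesUniversallyOpenSpec.comp_of_comp_of_comp {R S T U : Type} [CommRing R]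
    [CommRing S] [CommRing T] [CommRing U] {f : R →+* S} {g : S →+* T} {h : T →+* U}
    (hgf : InducesUniversallyOpenSpec (g.comp f)) (hhg : InducesUniversallyOpenSpec (h.comp g)) :
    InducesUniversallyOpenSpec (h.comp (g.comp f)) := by
  simp only [InducesUniversallyOpenSpec, ← universallyOpen_iff, CommRingCat.ofHom_comp,
    Spec.map_comp] at *
  exact UniversallyOpen.comp_of_comp_of_comp _ _ _

structure IsAlgDirectLimit {R : Type*} [CommRing R] {I : Type*} [Preorder I] (A : I → Type*)
    [∀ i, CommRing (A i)] [∀ i, Algebra R (A i)] {L : Type*} [CommRing L] [Algebra R L]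
    (t : ∀ i j, i ≤ j → A i →ₐ[R] A j) (ι : ∀ i, A i →ₐ[R] L) : Prop where
  transition_comp_transition : ∀ i j l (hij : i ≤ j) (hjl : j ≤ l),
    (t j l hjl).comp (t i j hij) = t i l (hij.trans hjl)
  ι_comp_transition : ∀ i j (hij : i ≤ j), (ι j).comp (t i j hij) = ι i
  exists_ι_eq : ∀ a, ∃ i x, ι i x = a
  exists_transition_eq : ∀ i (x y : A i), ι i x = ι i y →
    ∃ j, ∃ hij : i ≤ j, t i j hij x = t i j hij y

namespace IsAlgDirectLimit

variable {R : Type*} [CommRing R] {I : Type*} [Preorder I] {A : I → Type*}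
  [∀ i, CommRing (A i)] [∀ i, Algebra R (A i)] {L : Type*} [CommRing L] [Algebra R L]
  {t : ∀ i j, i ≤ j → A i →ₐ[R] A j} {ι : ∀ i, A i →ₐ[R] L}

theorem transition_apply_transition (h : IsAlgDirectLimit A t ι) {i j l : I} (hij : i ≤ j)
    (hjl : j ≤ l) (x : A i) : t j l hjl (t i j hij x) = t i l (hij.trans hjl) x :=
  DFunLike.congr_fun (h.transition_comp_transition i j l hij hjl) x

theorem eventually_transition_eq (h : IsAlgDirectLimit A t ι) {i : I} {x y : A i}
    (hxy : ι i x = ι i y) : ∀ᶠ j in atTop, ∀ hij : i ≤ j, t i j hij x = t i j hij y := by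
  obtain ⟨j₀, hij₀, hj₀⟩ := h.exists_transition_eq i x y hxy
  filter_upwards [eventually_ge_atTop j₀] with j hj₀j hij
  rw [← h.transition_apply_transition hij₀ hj₀j, hj₀, h.transition_apply_transition]

theorem eventually_exists_ι_eq (h : IsAlgDirectLimit A t ι) (a : L) :
    ∀ᶠ j in atTop, ∃ x, ι j x = a := by
  obtain ⟨i, x, rfl⟩ := h.exists_ι_eq a
  filter_upwards [eventually_ge_atTop i] with j hij
  exact ⟨t i j hij x, DFunLike.congr_fun (h.ι_comp_transition i j hij) x⟩

theorem eventually_comp_eq (h : IsAlgDirectLimit A t ι) {B : Type*} [CommRing B] [Algebra R B]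
    [Algebra.FiniteType R B] {i : I} {u v : B →ₐ[R] A i} (huv : (ι i).comp u = (ι i).comp v) :
    ∀ᶠ j in atTop, ∀ hij : i ≤ j, (t i j hij).comp u = (t i j hij).comp v := by
  obtain ⟨s, hs⟩ := Algebra.FiniteType.out (R := R) (A := B)
  have hgen := (eventually_all_finset s).2 fun b _ =>
    h.eventually_transition_eq (DFunLike.congr_fun huv b)
  filter_upwards [hgen] with j hj hij
  exact AlgHom.ext_of_adjoin_eq_top hs fun b hb => hj b hb hij

theorem eventually_exists_comp_eq [Nonempty I] [IsDirected I (· ≤ ·)]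
    (h : IsAlgDirectLimit A t ι) {B : Type*} [CommRing B] [Algebra R B]
    [Algebra.FinitePresentation R B] (φ : B →ₐ[R] L) :
    ∀ᶠ j in atTop, ∃ g : B →ₐ[R] A j, (ι j).comp g = φ := by
  obtain ⟨n, p, hp, G, hG⟩ := Algebra.FinitePresentation.out (R := R) (A := B)
  obtain ⟨i, hi⟩ := (eventually_all.2 fun m => h.eventually_exists_ι_eq (φ (p (.X m)))).exists
  choose z hz using hi
  let Φ : MvPolynomial (Fin n) R →ₐ[R] A i := MvPolynomial.aeval z
  have hΦ : (ι i).comp Φ = φ.comp p := MvPolynomial.algHom_ext fun m => by simp [Φ, hz]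
  have hrel : ∀ r ∈ G, ι i (Φ r) = ι i 0 := fun r hr => by
    have hpr : p r = 0 := RingHom.mem_ker.1 (hG ▸ Ideal.subset_span hr)
    simpa [hpr] using DFunLike.congr_fun hΦ r
  have hkill := (eventually_all_finset G).2 fun r hr => h.eventually_transition_eq (hrel r hr)
  filter_upwards [hkill, eventually_ge_atTop i] with j hj hij
  have hker : RingHom.ker p.toRingHom ≤ RingHom.ker ((t i j hij).comp Φ).toRingHom := by
    rw [← hG, Ideal.span_le]
    intro r hr
    simpa using hj r hr hij
  refine ⟨AlgHom.liftOfSurjective p hp _ hker, (AlgHom.cancel_right hp).1 ?_⟩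
  rw [AlgHom.comp_assoc, AlgHom.liftOfSurjective_comp, ← AlgHom.comp_assoc,
    h.ι_comp_transition, hΦ]

theorem eventually_exists_comp_eq_transition [Nonempty I] [IsDirected I (· ≤ ·)]
    (h : IsAlgDirectLimit A t ι) {i : I} [Algebra.FiniteType R (A i)] {B : Type*} [CommRing B]
    [Algebra R B] [Algebra.FinitePresentation R B] {ιB : B →ₐ[R] L} {e : A i →ₐ[R] B}
    (he : ιB.comp e = ι i) :
    ∀ᶠ j in atTop, ∀ hij : i ≤ j,
      ∃ s : B →ₐ[R] A j, (ι j).comp s = ιB ∧ s.comp e = t i j hij := by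
  obtain ⟨j₀, ⟨s₀, hs₀⟩, hij₀⟩ :=
    ((h.eventually_exists_comp_eq ιB).and (eventually_ge_atTop i)).exists
  have hse : (ι j₀).comp (s₀.comp e) = (ι j₀).comp (t i j₀ hij₀) := by
    rw [← AlgHom.comp_assoc, hs₀, he, h.ι_comp_transition]
  filter_upwards [h.eventually_comp_eq hse, eventually_ge_atTop j₀] with j hj hj₀j hij
  refine ⟨(t j₀ j hj₀j).comp s₀, ?_, ?_⟩
  · rw [← AlgHom.comp_assoc, h.ι_comp_transition, hs₀]
  · rw [AlgHom.comp_assoc, hj hj₀j, h.transition_comp_transition]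

end IsAlgDirectLimit

theorem statement15_general (k : Type) [Field k]
    (A : Type) [CommRing A] [Algebra k A]
    -- a presentation `A = colim_{α ∈ I} A_α` with universally open transitions
    (I : Type) [Preorder I] [IsDirected I (· ≤ ·)] [Nonempty I]
    (A₁ : I → Type) [∀ i, CommRing (A₁ i)] [∀ i, Algebra k (A₁ i)]
    (t₁ : ∀ i j : I, i ≤ j → (A₁ i →ₐ[k] A₁ j)) (ι₁ : ∀ i, A₁ i →ₐ[k] A)
    (ht₁_comp : ∀ (i j l : I) (hij : i ≤ j) (hjl : j ≤ l),
      (t₁ j l hjl).comp (t₁ i j hij) = t₁ i l (le_trans hij hjl))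
    (hι₁ : ∀ (i j : I) (hij : i ≤ j), (ι₁ j).comp (t₁ i j hij) = ι₁ i)
    (hft₁ : ∀ i, Algebra.FiniteType k (A₁ i))
    (huo₁ : ∀ (i j : I) (hij : i ≤ j), InducesUniversallyOpenSpec (t₁ i j hij).toRingHom)
    (hsurj₁ : ∀ a : A, ∃ i x, ι₁ i x = a)
    (heq₁ : ∀ (i : I) (x y : A₁ i), ι₁ i x = ι₁ i y →
      ∃ j, ∃ hij : i ≤ j, t₁ i j hij x = t₁ i j hij y)
    -- a presentation `A = colim_{β ∈ J} A′_β` with universally open transitions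
    (J : Type) [Preorder J] [IsDirected J (· ≤ ·)] [Nonempty J]
    (A₂ : J → Type) [∀ b, CommRing (A₂ b)] [∀ b, Algebra k (A₂ b)]
    (t₂ : ∀ b c : J, b ≤ c → (A₂ b →ₐ[k] A₂ c)) (ι₂ : ∀ b, A₂ b →ₐ[k] A)
    (ht₂_comp : ∀ (b c d : J) (hbc : b ≤ c) (hcd : c ≤ d),
      (t₂ c d hcd).comp (t₂ b c hbc) = t₂ b d (le_trans hbc hcd))
    (hι₂ : ∀ (b c : J) (hbc : b ≤ c), (ι₂ c).comp (t₂ b c hbc) = ι₂ b)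
    (hft₂ : ∀ b, Algebra.FiniteType k (A₂ b))
    (huo₂ : ∀ (b c : J) (hbc : b ≤ c), InducesUniversallyOpenSpec (t₂ b c hbc).toRingHom)
    (hsurj₂ : ∀ a : A, ∃ b x, ι₂ b x = a)
    (heq₂ : ∀ (b : J) (x y : A₂ b), ι₂ b x = ι₂ b y →
      ∃ c, ∃ hbc : b ≤ c, t₂ b c hbc x = t₂ b c hbc y) :
    ∀ β : J, ∃ α₀ : I, ∀ α : I, α₀ ≤ α →
      ∃ g : A₂ β →ₐ[k] A₁ α, (ι₁ α).comp g = ι₂ β ∧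
        InducesUniversallyOpenSpec g.toRingHom := by
  intro β
  have h₁ : IsAlgDirectLimit A₁ t₁ ι₁ := ⟨ht₁_comp, hι₁, hsurj₁, heq₁⟩
  have h₂ : IsAlgDirectLimit A₂ t₂ ι₂ := ⟨ht₂_comp, hι₂, hsurj₂, heq₂⟩
  have (i : I) : Algebra.FinitePresentation k (A₁ i) :=
    Algebra.FinitePresentation.of_finiteType.1 (hft₁ i)
  have (b : J) : Algebra.FinitePresentation k (A₂ b) :=
    Algebra.FinitePresentation.of_finiteType.1 (hft₂ b)
  obtain ⟨α', g₀, hg₀⟩ := (h₁.eventually_exists_comp_eq (ι₂ β)).exists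
  obtain ⟨γ, hγ, hβγ⟩ :=
    ((h₂.eventually_exists_comp_eq_transition hg₀).and (eventually_ge_atTop β)).exists
  obtain ⟨f, hf, hfg₀⟩ := hγ hβγ
  obtain ⟨α₀, hα₀⟩ := eventually_atTop.1
    ((h₁.eventually_exists_comp_eq_transition hf).and (eventually_ge_atTop α'))
  refine ⟨α₀, fun α hα => ?_⟩
  obtain ⟨hs, hα'α⟩ := hα₀ α hα
  obtain ⟨s, hsι, hsf⟩ := hs hα'α
  refine ⟨s.comp (t₂ β γ hβγ), by rw [← AlgHom.comp_assoc, hsι, hι₂], ?_⟩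
  rw [← hfg₀]
  have hfg₀_uo : InducesUniversallyOpenSpec (f.comp g₀).toRingHom := hfg₀ ▸ huo₂ β γ hβγ
  have hsf_uo : InducesUniversallyOpenSpec (s.comp f).toRingHom := hsf ▸ huo₁ α' α hα'α
  exact hfg₀_uo.comp_of_comp_of_comp hsf_uo

theorem statement15 (k : Type) [Field k]
    (A : Type) [CommRing A] [Algebra k A]
    -- a presentation `A = colim_{α ∈ I} A_α` with universally open transitions
    (I : Type) [Preorder I] [IsDirected I (· ≤ ·)] [Nonempty I]
    (A₁ : I → Type) [∀ i, CommRing (A₁ i)] [∀ i, Algebra k (A₁ i)]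
    (t₁ : ∀ i j : I, i ≤ j → (A₁ i →ₐ[k] A₁ j)) (ι₁ : ∀ i, A₁ i →ₐ[k] A)
    (ht₁_refl : ∀ i, t₁ i i le_rfl = AlgHom.id k (A₁ i))
    (ht₁_comp : ∀ (i j l : I) (hij : i ≤ j) (hjl : j ≤ l),
      (t₁ j l hjl).comp (t₁ i j hij) = t₁ i l (le_trans hij hjl))
    (hι₁ : ∀ (i j : I) (hij : i ≤ j), (ι₁ j).comp (t₁ i j hij) = ι₁ i)
    (hft₁ : ∀ i, Algebra.FiniteType k (A₁ i))
    (huo₁ : ∀ (i j : I) (hij : i ≤ j), InducesUniversallyOpenSpec (t₁ i j hij).toRingHom)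
    (hsurj₁ : ∀ a : A, ∃ i x, ι₁ i x = a)
    (heq₁ : ∀ (i : I) (x y : A₁ i), ι₁ i x = ι₁ i y →
      ∃ j, ∃ hij : i ≤ j, t₁ i j hij x = t₁ i j hij y)
    -- a presentation `A = colim_{β ∈ J} A′_β` with universally open transitions
    (J : Type) [Preorder J] [IsDirected J (· ≤ ·)] [Nonempty J]
    (A₂ : J → Type) [∀ b, CommRing (A₂ b)] [∀ b, Algebra k (A₂ b)]
    (t₂ : ∀ b c : J, b ≤ c → (A₂ b →ₐ[k] A₂ c)) (ι₂ : ∀ b, A₂ b →ₐ[k] A)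
    (ht₂_refl : ∀ b, t₂ b b le_rfl = AlgHom.id k (A₂ b))
    (ht₂_comp : ∀ (b c d : J) (hbc : b ≤ c) (hcd : c ≤ d),
      (t₂ c d hcd).comp (t₂ b c hbc) = t₂ b d (le_trans hbc hcd))
    (hι₂ : ∀ (b c : J) (hbc : b ≤ c), (ι₂ c).comp (t₂ b c hbc) = ι₂ b)
    (hft₂ : ∀ b, Algebra.FiniteType k (A₂ b))
    (huo₂ : ∀ (b c : J) (hbc : b ≤ c), InducesUniversallyOpenSpec (t₂ b c hbc).toRingHom)
    (hsurj₂ : ∀ a : A, ∃ b x, ι₂ b x = a)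
    (heq₂ : ∀ (b : J) (x y : A₂ b), ι₂ b x = ι₂ b y →
      ∃ c, ∃ hbc : b ≤ c, t₂ b c hbc x = t₂ b c hbc y) :
    ∀ β : J, ∃ α₀ : I, ∀ α : I, α₀ ≤ α →
      ∃ g : A₂ β →ₐ[k] A₁ α, (ι₁ α).comp g = ι₂ β ∧
        InducesUniversallyOpenSpec g.toRingHom :=
  statement15_general k A I A₁ t₁ ι₁ ht₁_comp hι₁ hft₁ huo₁ hsurj₁ heq₁ J A₂ t₂ ι₂ ht₂_comp hι₂ hft₂
    huo₂ hsurj₂ heq₂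
end
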